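/- arXiv:2304.00550 — 8 statements merged into one kernel-verified Lean document; each statement's English description precedes it below -/
import Mathlib

section
/- Let X be a real normed vector space of finite dimension, let x_1,…,x_n be points of X (n ≥ 1), and let x_0 ∈ X satisfy x_0 ≠ x_i for all i = 1,…,n. Then x_0 ∈ ft(x_1,…,x_n) if and only if for each i = 1,…,n there exists a continuous linear functional φ_i on X with ‖φ_i‖ = 1 and φ_i(x_i − x_0) = ‖x_i − x_0‖, such that Σ_{i=1}^n φ_i = 0. -/
/-!
The minimality of `x₀` says that `u = (xᵢ - x₀)ᵢ` is a point of smallest ℓ¹-seminorm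
`‖y‖₁ = ∑ ‖yᵢ‖` on its coset modulo the diagonal `D = {(v, …, v)}` of `Xⁿ`. By Hahn–Banach
there is a linear functional `g` on `Xⁿ` dominated by `‖·‖₁`, vanishing on `D` and with
`g u = ‖u‖₁`. Its components `φᵢ` have norm at most one, sum to zero because `g` kills `D`,
and must each attain `φᵢ uᵢ = ‖uᵢ‖` for their sum to reach `∑ ‖uᵢ‖`. Conversely, such `φᵢ`
give `∑ ‖xᵢ - x₀‖ = ∑ φᵢ (xᵢ - q) ≤ ∑ ‖xᵢ - q‖` for every `q`.
-/

/-- The Fermat–Torricelli set of the points `x 0, …, x (n-1)`: the set of points minimizing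
the sum of distances to the `x i`. -/
def ft {X : Type*} [NormedAddCommGroup X] {n : ℕ} (x : Fin n → X) : Set X :=
  {p | ∀ q : X, ∑ i, ‖p - x i‖ ≤ ∑ i, ‖q - x i‖}

theorem Seminorm.exists_dual_annihilator_of_le_add {E : Type*} [AddCommGroup E] [Module ℝ E]
    (p : Seminorm ℝ E) {D : Submodule ℝ E} {u : E} (hu : ∀ d ∈ D, p u ≤ p (u + d)) :
    ∃ g : Module.Dual ℝ E, (∀ d ∈ D, g d = 0) ∧ g u = p u ∧ ∀ x, |g x| ≤ p x := by
  by_cases huD : u ∈ D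
  · have hpu : p u = 0 := le_antisymm (by simpa using hu (-u) (D.neg_mem huD)) (apply_nonneg p u)
    exact ⟨0, fun _ _ => rfl, hpu.symm ▸ rfl, fun x => by simp⟩
  let f₀ : E →ₗ.[ℝ] ℝ := ⟨D, 0⟩
  let f := f₀.supSpanSingleton u (p u) huD
  have hf_apply (d : E) (hd : d ∈ D) (c : ℝ) (h : d + c • u ∈ f.domain) :
      f ⟨d + c • u, h⟩ = c * p u :=
    (f₀.supSpanSingleton_apply_mk u (p u) huD d hd c).trans (by simp [f₀])
  have hf_le : ∀ x, f x ≤ p x := by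
    rintro ⟨x, hx⟩
    obtain ⟨d, hd, w, hw, rfl⟩ := Submodule.mem_sup.1 hx
    obtain ⟨c, rfl⟩ := Submodule.mem_span_singleton.1 hw
    rw [hf_apply d hd c]
    rcases le_or_gt c 0 with hc | hc
    · exact (mul_nonpos_of_nonpos_of_nonneg hc (apply_nonneg p u)).trans (apply_nonneg p _)
    · calc c * p u ≤ c * p (u + c⁻¹ • d) := by gcongr; exact hu _ (D.smul_mem _ hd)
        _ = p (c • (u + c⁻¹ • d)) := by rw [map_smul_eq_mul, Real.norm_of_nonneg hc.le]
        _ = p (d + c • u) := by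
          rw [smul_add, smul_smul, mul_inv_cancel₀ hc.ne', one_smul, add_comm]
  obtain ⟨g, hgf, hgp⟩ := Module.Dual.exists_extension_of_le_seminorm_real f.domain f.toFun hf_le
  have hg_apply (d : E) (hd : d ∈ D) (c : ℝ) : g (d + c • u) = c * p u :=
    (hgf ⟨_, Submodule.add_mem_sup hd (Submodule.smul_mem _ c
      (Submodule.mem_span_singleton_self u))⟩).trans (hf_apply d hd c _)
  exact ⟨g, fun d hd => by simpa using hg_apply d hd 0, by simpa using hg_apply 0 D.zero_mem 1, hgp⟩

section

variable (ι X : Type*) [Fintype ι] [SeminormedAddCommGroup X] [NormedSpace ℝ X]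

noncomputable def sumNormSeminorm : Seminorm ℝ (ι → X) :=
  ∑ i, (normSeminorm ℝ X).comp (LinearMap.proj i)

variable {ι X}

theorem sumNormSeminorm_apply (y : ι → X) : sumNormSeminorm ι X y = ∑ i, ‖y i‖ := by
  simp [sumNormSeminorm]

theorem Module.Dual.exists_eq_sum_of_abs_le_sum_norm [DecidableEq ι] (g : Module.Dual ℝ (ι → X))
    (hg : ∀ y, |g y| ≤ ∑ i, ‖y i‖) :
    ∃ φ : ι → StrongDual ℝ X, (∀ i, ‖φ i‖ ≤ 1) ∧ ∀ y, g y = ∑ i, φ i (y i) := by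
  refine ⟨fun i => (g ∘ₗ LinearMap.single ℝ (fun _ => X) i).mkContinuous 1 fun v => ?_,
    fun i => LinearMap.mkContinuous_norm_le _ zero_le_one _, fun y => ?_⟩
  · simpa [Pi.single_apply, apply_ite] using hg (Pi.single i v)
  · conv_lhs => rw [← Finset.univ_sum_single y]
    simp [map_sum]

end

section

variable {X : Type*} [NormedAddCommGroup X] [NormedSpace ℝ X]

theorem StrongDual.apply_le_norm_of_norm_le_one {φ : StrongDual ℝ X} (hφ : ‖φ‖ ≤ 1) (v : X) :
    φ v ≤ ‖v‖ :=
  (le_abs_self _).trans ((φ.le_of_opNorm_le hφ v).trans_eq (one_mul _))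

theorem StrongDual.norm_eq_one_of_apply_eq_norm {φ : StrongDual ℝ X} {v : X} (hφ : ‖φ‖ ≤ 1)
    (hv : v ≠ 0) (h : φ v = ‖v‖) : ‖φ‖ = 1 := by
  refine le_antisymm hφ (le_of_mul_le_mul_right ?_ (norm_pos_iff.2 hv))
  simpa [h] using φ.le_opNorm v

theorem exists_norming_of_mem_ft {n : ℕ} {x : Fin n → X} {x₀ : X} (hx₀ : ∀ i, x₀ ≠ x i)
    (hmin : x₀ ∈ ft x) :
    ∃ φ : Fin n → StrongDual ℝ X,
      (∀ i, ‖φ i‖ = 1 ∧ φ i (x i - x₀) = ‖x i - x₀‖) ∧ ∑ i, φ i = 0 := by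
  have hu : ∀ d ∈ LinearMap.range (LinearMap.const (R := ℝ) (ι := Fin n) (M₂ := X)),
      sumNormSeminorm (Fin n) X (x - fun _ => x₀) ≤
        sumNormSeminorm (Fin n) X (x - (fun _ => x₀) + d) := by
    rintro _ ⟨v, rfl⟩
    have hshift : ∀ i, ‖x₀ - v - x i‖ = ‖x i - x₀ + v‖ := fun i => by
      rw [← norm_neg]; congr 1; abel
    simpa [sumNormSeminorm_apply, norm_sub_rev (x _), hshift] using hmin (x₀ - v)
  obtain ⟨g, hgD, hgu, hgp⟩ := (sumNormSeminorm (Fin n) X).exists_dual_annihilator_of_le_add hu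
  obtain ⟨φ, hφ, hgφ⟩ := g.exists_eq_sum_of_abs_le_sum_norm fun y => by
    simpa [sumNormSeminorm_apply] using hgp y
  have hφx : ∀ i, φ i (x i - x₀) = ‖x i - x₀‖ := by
    have hsum : ∑ i, φ i (x i - x₀) = ∑ i, ‖x i - x₀‖ := by
      simpa [hgφ, sumNormSeminorm_apply] using hgu
    exact fun i => (Finset.sum_eq_sum_iff_of_le fun i _ =>
      (φ i).apply_le_norm_of_norm_le_one (hφ i) _).1 hsum i (Finset.mem_univ i)
  refine ⟨φ, fun i => ⟨(φ i).norm_eq_one_of_apply_eq_norm (hφ i)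
    (sub_ne_zero.2 (hx₀ i).symm) (hφx i), hφx i⟩, ?_⟩
  ext v
  simpa [hgφ] using hgD _ ⟨v, rfl⟩

theorem mem_ft_of_norming {n : ℕ} {x : Fin n → X} {x₀ : X} (φ : Fin n → StrongDual ℝ X)
    (hφ : ∀ i, ‖φ i‖ ≤ 1) (hφx : ∀ i, φ i (x i - x₀) = ‖x i - x₀‖) (hsum : ∑ i, φ i = 0) :
    x₀ ∈ ft x := by
  intro q
  have hsplit : ∀ i, φ i (x i - x₀) = φ i (x i - q) + φ i (q - x₀) := fun i => by
    rw [← map_add, sub_add_sub_cancel]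
  calc ∑ i, ‖x₀ - x i‖ = ∑ i, φ i (x i - x₀) := by simp only [hφx, norm_sub_rev]
    _ = ∑ i, φ i (x i - q) := by
      rw [Finset.sum_congr rfl fun i _ => hsplit i, Finset.sum_add_distrib, ← sum_apply, hsum,
        zero_apply, add_zero]
    _ ≤ ∑ i, ‖q - x i‖ := Finset.sum_le_sum fun i _ => by
      rw [norm_sub_rev q]
      exact (φ i).apply_le_norm_of_norm_le_one (hφ i) _

end

theorem ft_point_iff_norming_functionals_general
    {X : Type*} [NormedAddCommGroup X] [NormedSpace ℝ X]
    {n : ℕ} (x : Fin n → X) (x₀ : X) (hx₀ : ∀ i, x₀ ≠ x i) :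
    x₀ ∈ ft x ↔
      ∃ φ : Fin n → (X →L[ℝ] ℝ),
        (∀ i, ‖φ i‖ = 1 ∧ φ i (x i - x₀) = ‖x i - x₀‖) ∧ ∑ i, φ i = 0 :=
  ⟨exists_norming_of_mem_ft hx₀, fun ⟨φ, hφ, hsum⟩ =>
    mem_ft_of_norming φ (fun i => (hφ i).1.le) (fun i => (hφ i).2) hsum⟩

theorem ft_point_iff_norming_functionals
    {X : Type*} [NormedAddCommGroup X] [NormedSpace ℝ X] [FiniteDimensional ℝ X]
    {n : ℕ} (hn : 1 ≤ n) (x : Fin n → X) (x₀ : X) (hx₀ : ∀ i, x₀ ≠ x i) :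
    x₀ ∈ ft x ↔
      ∃ φ : Fin n → (X →L[ℝ] ℝ),
        (∀ i, ‖φ i‖ = 1 ∧ φ i (x i - x₀) = ‖x i - x₀‖) ∧ ∑ i, φ i = 0 :=
  ft_point_iff_norming_functionals_general x x₀ hx₀
end

section
/- Let X be a real normed vector space of finite dimension and let x_1,…,x_{2k+1} (k ≥ 0) be points lying on one straight line in the order of their numbering, i.e. x_i = p + t_i • v for some p ∈ X, some nonzero v ∈ X, and real numbers t_1 < t_2 < … < t_{2k+1}. Then ft(x_1,…,x_{2k+1}) = { x_{k+1} }. -/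
open Finset

section Pairing

variable {E : Type*} [PseudoMetricSpace E] {n : ℕ}

theorem sum_dist_rev_add_two_mul_dist_le (x : Fin n → E) (q : E) {m : Fin n} (hm : m.rev = m) :
    ∑ i, dist (x i) (x i.rev) + 2 * dist q (x m) ≤ 2 * ∑ i, dist q (x i) := by
  set slack : Fin n → ℝ := fun i => dist q (x i) + dist q (x i.rev) - dist (x i) (x i.rev)
  have hslack : ∀ i, 0 ≤ slack i := fun i => sub_nonneg.2 (dist_triangle_left _ _ _)
  have hrev : ∑ i : Fin n, dist q (x i.rev) = ∑ i, dist q (x i) :=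
    Equiv.sum_comp Fin.revPerm fun i => dist q (x i)
  have hsum : ∑ i, slack i = 2 * ∑ i, dist q (x i) - ∑ i, dist (x i) (x i.rev) := by
    simp only [slack, sum_sub_distrib, sum_add_distrib, hrev]
    ring
  have hslack_m : slack m = 2 * dist q (x m) := by simp [slack, hm, two_mul]
  linarith [single_le_sum (fun i _ => hslack i) (mem_univ m)]

theorem sum_dist_add_dist_le_of_dist_add_dist_eq (x : Fin n → E) {m : Fin n} (hm : m.rev = m)
    (hbtw : ∀ i, dist (x i) (x m) + dist (x m) (x i.rev) = dist (x i) (x i.rev)) (q : E) :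
    ∑ i, dist (x m) (x i) + dist q (x m) ≤ ∑ i, dist q (x i) := by
  have hpairs : 2 * ∑ i, dist (x m) (x i) = ∑ i, dist (x i) (x i.rev) := by
    have hrev : ∑ i : Fin n, dist (x m) (x i.rev) = ∑ i, dist (x m) (x i) :=
      Equiv.sum_comp Fin.revPerm fun i => dist (x m) (x i)
    rw [two_mul]
    nth_rw 2 [← hrev]
    rw [← sum_add_distrib]
    exact sum_congr rfl fun i _ => by rw [dist_comm, hbtw]
  linarith [sum_dist_rev_add_two_mul_dist_le x q hm]

end Pairing

theorem ft_eq_singleton_of_forall_sum_dist_add_dist_le {E : Type*} [NormedAddCommGroup E] {n : ℕ}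
    (x : Fin n → E) (c : E) (h : ∀ q, ∑ i, dist c (x i) + dist q c ≤ ∑ i, dist q (x i)) :
    ft x = {c} := by
  simp only [dist_eq_norm] at h
  ext q
  refine ⟨fun hq => ?_, fun hq r => ?_⟩
  · have hc := h q
    have hq_c := hq c
    rw [Set.mem_singleton_iff, ← sub_eq_zero, ← norm_le_zero_iff]
    linarith
  · rw [Set.mem_singleton_iff.1 hq]
    linarith [h r, norm_nonneg (r - c)]

theorem wbtw_of_monotone_of_rev_eq {n : ℕ} {t : Fin n → ℝ} (ht : Monotone t) {m : Fin n}
    (hm : m.rev = m) (i : Fin n) : Wbtw ℝ (t i) (t m) (t i.rev) := by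
  rcases le_total i m with him | hmi
  · exact Wbtw.of_le_of_le (ht him) (ht (hm ▸ Fin.rev_le_rev.2 him))
  · exact wbtw_comm.1 (Wbtw.of_le_of_le (ht (hm ▸ Fin.rev_le_rev.2 hmi)) (ht hmi))

/-- For `2k+1` points lying on one straight line in the order of their numbering, the
Fermat–Torricelli set is the singleton consisting of the middle point `x_{k+1}`
(index `k` with 0-based numbering). -/
theorem ft_odd_collinear
    {X : Type*} [NormedAddCommGroup X] [NormedSpace ℝ X]
    {k : ℕ} (x : Fin (2 * k + 1) → X) (p v : X)
    (t : Fin (2 * k + 1) → ℝ) (ht : StrictMono t)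
    (hx : ∀ i, x i = p + t i • v) :
    ft x = {x ⟨k, by omega⟩} := by
  have hmid : (⟨k, by omega⟩ : Fin (2 * k + 1)).rev = ⟨k, by omega⟩ := by
    ext
    simp only [Fin.val_rev]
    omega
  have hline : ∀ i, x i = AffineMap.lineMap p (p + v) (t i) := by
    simp [hx, AffineMap.lineMap_apply_module', add_comm]
  refine ft_eq_singleton_of_forall_sum_dist_add_dist_le x _
    (sum_dist_add_dist_le_of_dist_add_dist_eq x hmid fun i => ?_)
  simp only [hline]
  exact ((wbtw_of_monotone_of_rev_eq ht.monotone hmid i).map _).dist_add_dist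
end

section
/- Let X be a real normed vector space of finite dimension at least 2 and let n ≥ 4 be even. Then the following are equivalent: (1) for every choice of n points x_1,…,x_n in X that do not all lie on one straight line, the Fermat–Torricelli set ft(x_1,…,x_n) is a single point; (2) the norm of X is strictly convex. -/
open Finset Filter

theorem collinear_of_subset_affineSpan_pair {k V P : Type*} [DivisionRing k] [AddCommGroup V]
    [Module k V] [AddTorsor V P] {s : Set P} {p q : P} (h : s ⊆ line[k, p, q]) :
    Collinear k s := by
  refine le_trans (Submodule.rank_mono ((vectorSpan_mono k h).trans ?_)) (collinear_pair k p q)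
  rw [← AffineSubspace.direction_eq_vectorSpan, direction_affineSpan]

theorem sum_neg_one_pow_smul_div_two_eq_zero {R M : Type*} [Ring R] [AddCommGroup M]
    [Module R M] {n : ℕ} (hn : Even n) (c : ℕ → M) :
    ∑ i : Fin n, (-1 : R) ^ (i : ℕ) • c (i / 2) = 0 := by
  obtain ⟨k, rfl⟩ := hn
  rw [Fin.sum_univ_eq_sum_range (fun i => (-1 : R) ^ i • c (i / 2))]
  induction k with
  | zero => simp
  | succ k ih =>
    rw [show k + 1 + (k + 1) = k + k + 1 + 1 by ring, sum_range_succ, sum_range_succ, ih,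
      show (k + k + 1) / 2 = k by omega, show (k + k) / 2 = k by omega, ← two_mul, pow_succ,
      pow_mul]
    simp

section Dual

variable {X : Type*} [NormedAddCommGroup X] [NormedSpace ℝ X]

theorem apply_le_norm_of_norm_le_one {f : StrongDual ℝ X} (hf : ‖f‖ ≤ 1) (y : X) : f y ≤ ‖y‖ :=
  calc f y ≤ ‖f y‖ := le_abs_self _
    _ ≤ 1 * ‖y‖ := f.le_of_opNorm_le hf y
    _ = ‖y‖ := one_mul _

theorem mem_ft_of_dual_certificate {n : ℕ} (x : Fin n → X) {p : X}
    (f : Fin n → StrongDual ℝ X) (hf : ∀ i, ‖f i‖ ≤ 1) (hsum : ∑ i, f i = 0)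
    (hp : ∀ i, f i (x i - p) = ‖p - x i‖) : p ∈ ft x := by
  intro q
  have hsum_apply : ∀ y, ∑ i, f i y = 0 := fun y => by
    simpa using congrArg (fun g : StrongDual ℝ X => g y) hsum
  calc ∑ i, ‖p - x i‖ = ∑ i, f i (x i - p) := (sum_congr rfl fun i _ => hp i).symm
    _ = ∑ i, f i (x i - q) := by simp only [map_sub, sum_sub_distrib, hsum_apply]
    _ ≤ ∑ i, ‖q - x i‖ := sum_le_sum fun i _ => by
        rw [norm_sub_rev]; exact apply_le_norm_of_norm_le_one (hf i) _

theorem mem_ft_of_dual_pairs {n : ℕ} (hn : Even n) (a : ℕ → X) (g : ℕ → StrongDual ℝ X)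
    (hg : ∀ k, ‖g k‖ ≤ 1) {p : X} (hsub : ∀ k, g k (a k - p) = ‖a k - p‖)
    (hadd : ∀ k, g k (a k + p) = ‖a k + p‖) :
    p ∈ ft (fun i : Fin n => (-1 : ℝ) ^ (i : ℕ) • a (i / 2)) := by
  refine mem_ft_of_dual_certificate _ (fun i => (-1 : ℝ) ^ (i : ℕ) • g (i / 2)) (fun i => ?_)
    (sum_neg_one_pow_smul_div_two_eq_zero hn g) (fun i => ?_)
  · rw [norm_smul, norm_pow, norm_neg, norm_one, one_pow, one_mul]
    exact hg _
  · rcases Nat.even_or_odd (i : ℕ) with h | h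
    · simp [h.neg_one_pow, hsub, norm_sub_rev]
    · simpa [h.neg_one_pow, add_comm] using hadd (i / 2)

end Dual

section FermatTorricelli

variable {X : Type*} [NormedAddCommGroup X] [NormedSpace ℝ X] {n : ℕ}

theorem ft_nonempty [FiniteDimensional ℝ X] (hn : 0 < n) (x : Fin n → X) : (ft x).Nonempty := by
  have hcoercive : Tendsto (fun q => ‖q - x ⟨0, hn⟩‖) (cocompact X) atTop := by
    simpa only [dist_eq_norm] using tendsto_dist_right_cocompact_atTop (x ⟨0, hn⟩)
  obtain ⟨p, hp⟩ := (continuous_finsetSum _ fun i _ => by fun_prop).exists_forall_le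
    (tendsto_atTop_mono (fun q => single_le_sum (f := fun i => ‖q - x i‖)
      (fun i _ => norm_nonneg _) (mem_univ _)) hcoercive)
  exact ⟨p, hp⟩

theorem sameRay_sub_of_mem_ft [StrictConvexSpace ℝ X] (x : Fin n → X) {p q : X}
    (hp : p ∈ ft x) (hq : q ∈ ft x) (i : Fin n) : SameRay ℝ (p - x i) (q - x i) := by
  set m : X := (2 : ℝ)⁻¹ • (p + q)
  have hsum_eq : ∑ i, ‖(p - x i) + (q - x i)‖ = ∑ i, (‖p - x i‖ + ‖q - x i‖) := by
    refine le_antisymm (sum_le_sum fun i _ => norm_add_le _ _) ?_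
    have hmid : ∀ i, (p - x i) + (q - x i) = (2 : ℝ) • (m - x i) := fun i => by
      simp only [m]; module
    calc ∑ i, (‖p - x i‖ + ‖q - x i‖) = 2 * ∑ i, ‖p - x i‖ := by
          rw [sum_add_distrib, le_antisymm (hp q) (hq p), two_mul]
      _ ≤ 2 * ∑ i, ‖m - x i‖ := by linarith [hp m]
      _ = ∑ i, ‖(p - x i) + (q - x i)‖ := by
          simp only [hmid, norm_smul, Real.norm_two, mul_sum]
  exact sameRay_iff_norm_add.2 <|
    (sum_eq_sum_iff_of_le fun i _ => norm_add_le _ _).1 hsum_eq i (mem_univ i)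

theorem ft_subsingleton [StrictConvexSpace ℝ X] (x : Fin n → X)
    (hx : ¬ Collinear ℝ (Set.range x)) : (ft x).Subsingleton := by
  intro p hp q hq
  by_contra hpq
  refine hx (collinear_of_subset_affineSpan_pair (p := p) (q := q) ?_)
  rintro _ ⟨i, rfl⟩
  have hcol : Collinear ℝ {x i, p, q} := by
    rcases wbtw_total_of_sameRay_vsub_left (x := x i) (y := p) (z := q)
        (sameRay_sub_of_mem_ft x hp hq i) with h | h
    · exact h.collinear
    · rw [Set.pair_comm]; exact h.collinear
  exact hcol.mem_affineSpan_of_mem_of_ne (by simp) (by simp) (by simp) hpq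

end FermatTorricelli

section FlatSegment

variable {X : Type*} [NormedAddCommGroup X] [NormedSpace ℝ X] {n : ℕ}

theorem not_collinear_self_neg_of_norm_sub_add_eq_one {m d : X} (hm : ‖m‖ = 1) (hsub : ‖m - d‖ = 1)
    (hadd : ‖m + d‖ = 1) (hd : d ≠ 0) : ¬ Collinear ℝ ({m, -m, d} : Set X) := by
  intro hcol
  have hm_ne_neg : m ≠ -m := by
    rw [ne_eq, ← sub_eq_zero, sub_neg_eq_add, ← two_smul ℝ, smul_eq_zero]
    rintro (h | rfl)
    · norm_num at h
    · simp at hm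
  have hline : d ∈ line[ℝ, m, -m] :=
    hcol.mem_affineSpan_of_mem_of_ne (by simp) (by simp) (by simp) hm_ne_neg
  obtain ⟨r, hr⟩ := mem_affineSpan_pair_iff_exists_lineMap_eq.1 hline
  have hdm : d = (1 - 2 * r) • m := by
    rw [← hr, AffineMap.lineMap_apply]; simp only [vsub_eq_sub, vadd_eq_add]; module
  rw [show m - d = (2 * r) • m by rw [hdm]; module, norm_smul, hm, mul_one,
    Real.norm_eq_abs] at hsub
  rw [show m + d = (2 - 2 * r) • m by rw [hdm]; module, norm_smul, hm, mul_one,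
    Real.norm_eq_abs] at hadd
  have hr : r = 1 / 2 := by
    rcases (abs_eq zero_le_one).1 hsub with h | h <;>
      rcases (abs_eq zero_le_one).1 hadd with h' | h' <;> linarith
  exact hd (by rw [hdm, hr]; norm_num)

theorem exists_not_collinear_zero_mem_ft_mem_ft {m d : X} (hm : ‖m‖ = 1) (hsub : ‖m - d‖ = 1)
    (hadd : ‖m + d‖ = 1) (hd : d ≠ 0) (hn : 3 ≤ n) (heven : Even n) :
    ∃ x : Fin n → X, ¬ Collinear ℝ (Set.range x) ∧ 0 ∈ ft x ∧ d ∈ ft x := by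
  obtain ⟨φ, hφ, hφm⟩ := exists_dual_vector'' ℝ m
  obtain ⟨ψ, hψ, hψd⟩ := exists_dual_vector'' ℝ d
  simp only [RCLike.ofReal_real_eq_id, id] at hφm hψd
  have hφd : φ d = 0 := by
    have h₁ := apply_le_norm_of_norm_le_one hφ (m - d)
    have h₂ := apply_le_norm_of_norm_le_one hφ (m + d)
    simp only [map_sub, map_add, hsub, hadd, hφm, hm] at h₁ h₂
    linarith
  have hdd : ‖d + d‖ = ‖d‖ + ‖d‖ := by rw [← two_smul ℝ d, norm_smul, Real.norm_two, two_mul]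
  set a : ℕ → X := fun k => if k = 0 then m else d
  set g : ℕ → StrongDual ℝ X := fun k => if k = 0 then φ else ψ
  have hg : ∀ k, ‖g k‖ ≤ 1 := fun k => by by_cases hk : k = 0 <;> simp [g, hk, hφ, hψ]
  refine ⟨fun i : Fin n => (-1 : ℝ) ^ (i : ℕ) • a (i / 2), fun hcol => ?_,
    mem_ft_of_dual_pairs heven a g hg (fun k => ?_) (fun k => ?_),
    mem_ft_of_dual_pairs heven a g hg (fun k => ?_) (fun k => ?_)⟩
  · refine not_collinear_self_neg_of_norm_sub_add_eq_one hm hsub hadd hd (hcol.subset ?_)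
    rintro _ (rfl | rfl | rfl)
    exacts [⟨⟨0, by omega⟩, by simp [a]⟩, ⟨⟨1, by omega⟩, by simp [a]⟩,
      ⟨⟨2, by omega⟩, by simp [a]⟩]
  all_goals by_cases hk : k = 0 <;> simp [a, g, hk, hφm, hψd, hφd, hsub, hadd, hm, hdd]

theorem strictConvexSpace_of_ft_subsingleton (hn : 3 ≤ n) (heven : Even n)
    (H : ∀ x : Fin n → X, ¬ Collinear ℝ (Set.range x) → (ft x).Subsingleton) :
    StrictConvexSpace ℝ X := by
  refine StrictConvexSpace.of_norm_add_ne_two fun u v hu hv huv h2 => ?_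
  set m : X := (2 : ℝ)⁻¹ • (u + v)
  set d : X := (2 : ℝ)⁻¹ • (v - u)
  have hm : ‖m‖ = 1 := by
    rw [norm_smul, h2, norm_inv, Real.norm_two, inv_mul_cancel₀ two_ne_zero]
  have hsub : ‖m - d‖ = 1 := by rw [← hu]; congr 1; module
  have hadd : ‖m + d‖ = 1 := by rw [← hv]; congr 1; module
  have hd : d ≠ 0 := by simpa [d, sub_eq_zero] using huv.symm
  obtain ⟨x, hx, h0, hdx⟩ := exists_not_collinear_zero_mem_ft_mem_ft hm hsub hadd hd hn heven
  exact hd (H x hx hdx h0)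

end FlatSegment

theorem ft_unique_even_iff_strictConvex_general
    {X : Type*} [NormedAddCommGroup X] [NormedSpace ℝ X] [FiniteDimensional ℝ X]
    {n : ℕ} (hn : 4 ≤ n) (heven : Even n) :
    (∀ x : Fin n → X, ¬ Collinear ℝ (Set.range x) → ∃ p : X, ft x = {p}) ↔
      StrictConvexSpace ℝ X := by
  constructor
  · refine fun H => strictConvexSpace_of_ft_subsingleton (by omega) heven fun x hx => ?_
    obtain ⟨p, hp⟩ := H x hx
    exact hp ▸ Set.subsingleton_singleton
  · intro _ x hx
    exact Set.exists_eq_singleton_iff_nonempty_subsingleton.2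
      ⟨ft_nonempty (by omega) x, ft_subsingleton x hx⟩

/-- For even `n ≥ 4`, the Fermat–Torricelli set is a single point for any `n` points not
all on one straight line iff the norm is strictly convex. -/
theorem ft_unique_even_iff_strictConvex
    {X : Type*} [NormedAddCommGroup X] [NormedSpace ℝ X] [FiniteDimensional ℝ X]
    (hd : 2 ≤ Module.finrank ℝ X)
    {n : ℕ} (hn : 4 ≤ n) (heven : Even n) :
    (∀ x : Fin n → X, ¬ Collinear ℝ (Set.range x) → ∃ p : X, ft x = {p}) ↔
      StrictConvexSpace ℝ X :=
  ft_unique_even_iff_strictConvex_general hn heven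
end

section
/- Let X be a real normed vector space of dimension 2. Suppose there exist continuous linear functionals φ_1,…,φ_n on X (n ≥ 1) with ‖φ_i‖ = 1 for all i and Σ_{i=1}^n φ_i = 0, such that every face F(φ_i) contains at least two distinct points. Then there exist points x_1,…,x_n in X for which the Fermat–Torricelli set ft(x_1,…,x_n) has nonempty interior. -/
/-- The face of the unit circle determined by a norm-one functional `φ`. -/
def face {X : Type*} [NormedAddCommGroup X] [NormedSpace ℝ X] (φ : X →L[ℝ] ℝ) : Set X :=
  {u | ‖u‖ = 1 ∧ φ u = 1}

open Filter Topology

section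

variable {X : Type*} [NormedAddCommGroup X] [NormedSpace ℝ X]

lemma ContinuousLinearMap.apply_le_norm_of_opNorm_le_one {φ : X →L[ℝ] ℝ} (hφ : ‖φ‖ ≤ 1)
    (x : X) : φ x ≤ ‖x‖ :=
  (le_abs_self _).trans <| (φ.le_of_opNorm_le hφ x).trans_eq (one_mul _)

lemma linearIndependent_pair_of_apply_eq_one {φ : X →L[ℝ] ℝ} {u v : X} (huv : u ≠ v)
    (hu : φ u = 1) (hv : φ v = 1) : LinearIndependent ℝ ![u, v] := by
  rw [LinearIndependent.pair_iff]
  intro s t hst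
  have hts : t = -s := by
    have := congrArg φ hst
    simp only [map_add, map_smul, hu, hv, smul_eq_mul, mul_one, map_zero] at this
    linarith
  subst hts
  have : s • (u - v) = 0 := by rw [← hst]; module
  rcases smul_eq_zero.mp this with hs | huv'
  · simp [hs]
  · exact absurd (sub_eq_zero.mp huv') huv

lemma norm_sum_smul_eq_apply_of_mem_face {ι : Type*} {φ : X →L[ℝ] ℝ} (hφ : ‖φ‖ ≤ 1)
    {u : ι → X} (hu : ∀ i, u i ∈ face φ) {c : ι → ℝ} (hc : ∀ i, 0 ≤ c i) (s : Finset ι) :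
    ‖∑ i ∈ s, c i • u i‖ = φ (∑ i ∈ s, c i • u i) := by
  refine le_antisymm ?_ (φ.apply_le_norm_of_opNorm_le_one hφ _)
  calc ‖∑ i ∈ s, c i • u i‖ ≤ ∑ i ∈ s, ‖c i • u i‖ := norm_sum_le _ _
    _ = φ (∑ i ∈ s, c i • u i) := by
      simp [norm_smul, (hu _).1, (hu _).2, abs_of_nonneg (hc _)]

lemma eventually_norm_eq_apply_of_mem_face (hd : Module.finrank ℝ X = 2) {φ : X →L[ℝ] ℝ}
    (hφ : ‖φ‖ ≤ 1) {u v : X} (huv : u ≠ v) (hu : u ∈ face φ) (hv : v ∈ face φ) :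
    ∀ᶠ w in 𝓝 (u + v), ‖w‖ = φ w := by
  have : FiniteDimensional ℝ X := .of_finrank_eq_succ hd
  let B := basisOfLinearIndependentOfCardEqFinrank
    (linearIndependent_pair_of_apply_eq_one huv hu.2 hv.2) (by simp [hd])
  have hB : ∀ i, B i ∈ face φ := by
    simpa [B, coe_basisOfLinearIndependentOfCardEqFinrank, Fin.forall_fin_two] using ⟨hu, hv⟩
  have hcoord : B.equivFun (u + v) = fun _ => 1 := by
    rw [← LinearEquiv.eq_symm_apply, Module.Basis.equivFun_symm_apply]
    simp [B, coe_basisOfLinearIndependentOfCardEqFinrank, Fin.sum_univ_two]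
  have hpos : ∀ᶠ w in 𝓝 (u + v), ∀ i, 0 < B.equivFun w i := by
    refine eventually_all.2 fun i => ?_
    have hcont : Continuous fun w => B.equivFun w i :=
      (continuous_apply i).comp (B.equivFun.toLinearMap.continuous_of_finiteDimensional)
    exact hcont.continuousAt.eventually_const_lt (by simp [hcoord])
  filter_upwards [hpos] with w hw
  rw [← B.sum_equivFun w]
  exact norm_sum_smul_eq_apply_of_mem_face hφ hB (fun i => (hw i).le) _

lemma mem_ft_of_forall_norm_eq_apply {n : ℕ} {φ : Fin n → X →L[ℝ] ℝ} (hφ : ∀ i, ‖φ i‖ ≤ 1)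
    (hsum : ∑ i, φ i = 0) {x : Fin n → X} {p : X} (hp : ∀ i, ‖p - x i‖ = φ i (p - x i)) :
    p ∈ ft x := by
  intro q
  have hconst : ∑ i, φ i (p - x i) = ∑ i, φ i (q - x i) := by
    rw [← sub_eq_zero, ← Finset.sum_sub_distrib]
    simp_rw [← map_sub, sub_sub_sub_cancel_right, ← _root_.sum_apply, hsum, zero_apply]
  calc ∑ i, ‖p - x i‖ = ∑ i, φ i (q - x i) := by simp_rw [hp, hconst]
    _ ≤ ∑ i, ‖q - x i‖ :=
      Finset.sum_le_sum fun i _ => (φ i).apply_le_norm_of_opNorm_le_one (hφ i) _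

end

theorem ft_polygon_of_consistent_flattenings_general
    {X : Type*} [NormedAddCommGroup X] [NormedSpace ℝ X]
    (hd : Module.finrank ℝ X = 2)
    {n : ℕ} (φ : Fin n → (X →L[ℝ] ℝ))
    (hnorm : ∀ i, ‖φ i‖ = 1) (hsum : ∑ i, φ i = 0)
    (hflat : ∀ i, ∃ u v : X, u ≠ v ∧ u ∈ face (φ i) ∧ v ∈ face (φ i)) :
    ∃ x : Fin n → X, (interior (ft x)).Nonempty := by
  choose u v huv hu hv using hflat
  refine ⟨fun i => -(u i + v i), 0, mem_interior_iff_mem_nhds.2 ?_⟩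
  have hnear : ∀ i, ∀ᶠ p in 𝓝 (0 : X), ‖p + (u i + v i)‖ = φ i (p + (u i + v i)) := fun i =>
    ((continuous_add_const (u i + v i)).tendsto' 0 _ (zero_add _)).eventually
      (eventually_norm_eq_apply_of_mem_face hd (hnorm i).le (huv i) (hu i) (hv i))
  filter_upwards [eventually_all.2 hnear] with p hp
  exact mem_ft_of_forall_norm_eq_apply (fun i => (hnorm i).le) hsum
    (by simpa only [sub_neg_eq_add] using hp)

/-- If a Minkowski plane has a consistent set of `n` faces of the unit circle, all of
which are flattenings, then there are `n` points whose Fermat–Torricelli set has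
nonempty interior (is a non-degenerate polygon). -/
theorem ft_polygon_of_consistent_flattenings
    {X : Type*} [NormedAddCommGroup X] [NormedSpace ℝ X]
    (hd : Module.finrank ℝ X = 2)
    {n : ℕ} (hn : 1 ≤ n) (φ : Fin n → (X →L[ℝ] ℝ))
    (hnorm : ∀ i, ‖φ i‖ = 1) (hsum : ∑ i, φ i = 0)
    (hflat : ∀ i, ∃ u v : X, u ≠ v ∧ u ∈ face (φ i) ∧ v ∈ face (φ i)) :
    ∃ x : Fin n → X, (interior (ft x)).Nonempty :=
  ft_polygon_of_consistent_flattenings_general hd φ hnorm hsum hflat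
end

section
/- In the space ℝ³ equipped with the supremum norm ‖(x,y,z)‖ = max(|x|,|y|,|z|) (whose unit ball is a cube), there exist three points x_1, x_2, x_3 such that the Fermat–Torricelli set ft(x_1, x_2, x_3) contains at least two distinct points. -/
/-!
The points `(1,0,0)`, `(-1,0,0)`, `(0,2,0)` are pairwise at sup-distance `2`. By the triangle
inequality, every point has distance sum at least half the perimeter, here `3`; the points
`(0,1,t)` with `|t| ≤ 1` are at distance `1` from all three, so the whole segment minimizes.
-/

theorem norm_vec_three (x y z : ℝ) : ‖![x, y, z]‖ = max |x| (max |y| |z|) := by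
  refine le_antisymm (pi_norm_le_iff_of_nonneg (by positivity) |>.2 ?_) ?_
  · intro i
    fin_cases i <;> simp
  · refine max_le ?_ (max_le ?_ ?_)
    · simpa using norm_le_pi_norm ![x, y, z] 0
    · simpa using norm_le_pi_norm ![x, y, z] 1
    · simpa using norm_le_pi_norm ![x, y, z] 2

theorem half_perimeter_le_sum_norm_sub {X : Type*} [SeminormedAddCommGroup X] (a b c q : X) :
    (‖a - b‖ + ‖b - c‖ + ‖a - c‖) / 2 ≤ ‖q - a‖ + ‖q - b‖ + ‖q - c‖ := by
  have hab := norm_sub_le_norm_sub_add_norm_sub a q b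
  have hbc := norm_sub_le_norm_sub_add_norm_sub b q c
  have hac := norm_sub_le_norm_sub_add_norm_sub a q c
  rw [norm_sub_rev a q, norm_sub_rev b q] at *
  linarith

theorem mem_ft_of_sum_norm_sub_le_half_perimeter {X : Type*} [NormedAddCommGroup X]
    {a b c p : X} (h : ‖p - a‖ + ‖p - b‖ + ‖p - c‖ ≤ (‖a - b‖ + ‖b - c‖ + ‖a - c‖) / 2) :
    p ∈ ft ![a, b, c] := fun q => by
  simpa [Fin.sum_univ_three, add_assoc] using h.trans (half_perimeter_le_sum_norm_sub a b c q)

/-- In `ℝ³` with the supremum norm (unit ball a cube), there exist three points whose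
Fermat–Torricelli set contains at least two distinct points. -/
theorem cube_norm_exists_nonunique_ft :
    ∃ x₁ x₂ x₃ : (Fin 3 → ℝ),
      ∃ a ∈ ft ![x₁, x₂, x₃], ∃ b ∈ ft ![x₁, x₂, x₃], a ≠ b := by
  refine ⟨![1, 0, 0], ![-1, 0, 0], ![0, 2, 0], ![0, 1, 0], ?_, ![0, 1, 1], ?_, ?_⟩
  · apply mem_ft_of_sum_norm_sub_le_half_perimeter
    simp only [Matrix.cons_sub_cons, Matrix.empty_sub_empty, norm_vec_three]
    norm_num
  · apply mem_ft_of_sum_norm_sub_le_half_perimeter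
    simp only [Matrix.cons_sub_cons, Matrix.empty_sub_empty, norm_vec_three]
    norm_num
  · intro h
    simpa using congrFun h 2
end

section
/- In the space ℝ³ equipped with the supremum norm ‖(x,y,z)‖ = max(|x|,|y|,|z|) (whose unit ball is a cube), for any three points x_1, x_2, x_3, if the Fermat–Torricelli set ft(x_1, x_2, x_3) is not a single point, then there exist a ≠ b such that ft(x_1, x_2, x_3) equals the closed segment with endpoints a and b. -/
open Filter Topology Matrix Set

section NormedGroup

variable {E : Type*} [NormedAddCommGroup E] {n : ℕ} (x : Fin n → E)

lemma ft_eq_iInter : ft x = ⋂ q, {p | ∑ i, ‖p - x i‖ ≤ ∑ i, ‖q - x i‖} := by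
  ext; simp [ft]

lemma isClosed_ft : IsClosed (ft x) := by
  rw [ft_eq_iInter]
  exact isClosed_iInter fun q => isClosed_le (by fun_prop) continuous_const

lemma norm_sub_le_sum_norm_sub [NeZero n] (p : E) : ‖p - x 0‖ ≤ ∑ i, ‖p - x i‖ :=
  Finset.single_le_sum (fun i _ => norm_nonneg (p - x i)) (Finset.mem_univ 0)

lemma isBounded_ft [NeZero n] : Bornology.IsBounded (ft x) := by
  refine (Metric.isBounded_closedBall (x := x 0) (r := ∑ i, ‖x 0 - x i‖)).subset fun p hp => ?_
  rw [Metric.mem_closedBall, dist_eq_norm]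
  exact (norm_sub_le_sum_norm_sub x p).trans (hp (x 0))

lemma isCompact_ft [ProperSpace E] [NeZero n] : IsCompact (ft x) :=
  Metric.isCompact_of_isClosed_isBounded (isClosed_ft x) (isBounded_ft x)

lemma ft_nonempty_s14 [ProperSpace E] [NeZero n] : (ft x).Nonempty := by
  refine Continuous.exists_forall_le (by fun_prop)
    (tendsto_atTop_mono (norm_sub_le_sum_norm_sub x) ?_)
  refine tendsto_atTop_mono (fun p => norm_sub_norm_le p (x 0)) ?_
  simpa only [sub_eq_add_neg] using
    tendsto_atTop_add_const_right _ (-‖x 0‖) tendsto_norm_cocompact_atTop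

variable [NormedSpace ℝ E]

lemma convexOn_sum_norm_sub : ConvexOn ℝ univ fun p => ∑ i, ‖p - x i‖ := by
  have h := Finset.sum_induction (s := Finset.univ) (fun i p => ‖p - x i‖) (ConvexOn ℝ univ)
    (fun _ _ => ConvexOn.add) (convexOn_const 0 convex_univ)
    fun i _ => by simpa only [dist_eq_norm] using convexOn_univ_dist (x i)
  simpa only [Finset.sum_fn] using h

lemma convex_ft : Convex ℝ (ft x) := by
  rw [ft_eq_iInter]
  exact convex_iInter fun q => by simpa using (convexOn_sum_norm_sub x).convex_le (∑ i, ‖q - x i‖)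

lemma norm_sum_sub_eq_sum_norm_sub_of_mem_ft {ι : Type*} [Fintype ι] {y : ι → E}
    (hy : ∀ k, y k ∈ ft x) (i : Fin n) : ‖∑ k, (y k - x i)‖ = ∑ k, ‖y k - x i‖ := by
  rcases isEmpty_or_nonempty ι with hι | hι
  · simp
  set c : ℝ := (Fintype.card ι : ℝ)
  have hc : 0 < c := by positivity
  set m := ∑ k, c⁻¹ • y k
  have hm : m ∈ ft x := (convex_ft x).sum_mem (fun _ _ => by positivity)
    (by simp [c, Finset.card_univ, hc.ne']) fun k _ => hy k
  have hsum : ∀ i, ∑ k, (y k - x i) = c • (m - x i) := fun i => by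
    simp [m, c, smul_sub, ← Finset.smul_sum, smul_smul, hc.ne', Finset.sum_sub_distrib,
      Nat.cast_smul_eq_nsmul]
  have htot : ∑ i, ∑ k, ‖y k - x i‖ ≤ ∑ i, ‖∑ k, (y k - x i)‖ :=
    calc ∑ i, ∑ k, ‖y k - x i‖ = ∑ k, ∑ i, ‖y k - x i‖ := Finset.sum_comm
      _ ≤ ∑ k : ι, ∑ i, ‖m - x i‖ := Finset.sum_le_sum fun k _ => hy k m
      _ = ∑ i, ‖∑ k, (y k - x i)‖ := by
        simp [hsum, norm_smul, ← Finset.mul_sum, c]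
  exact ((Finset.sum_eq_sum_iff_of_le fun i _ => norm_sum_le _ _).1
    (le_antisymm (Finset.sum_le_sum fun i _ => norm_sum_le _ _) htot) i (Finset.mem_univ i))

lemma exists_eq_segment_of_subset_affineSpan_pair {s : Set E} (hs : IsCompact s)
    (hconv : Convex ℝ s) {a b : E} (ha : a ∈ s) (hb : b ∈ s) (hab : a ≠ b)
    (hline : s ⊆ line[ℝ, a, b]) : ∃ c d, c ≠ d ∧ s = segment ℝ c d := by
  set L : ℝ →ᵃ[ℝ] E := AffineMap.lineMap a b
  set T := L ⁻¹' s
  have hLT : L '' T = s := image_preimage_eq_of_subset fun z hz => by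
    obtain ⟨t, rfl⟩ := mem_affineSpan_pair_iff_exists_lineMap_eq.1 (hline hz)
    exact ⟨t, rfl⟩
  have h0 : (0 : ℝ) ∈ T := by simpa [T, L] using ha
  have h1 : (1 : ℝ) ∈ T := by simpa [T, L] using hb
  have hT : IsCompact T := by
    obtain ⟨R, hR⟩ := hs.isBounded.subset_closedBall a
    refine Metric.isCompact_of_isClosed_isBounded
      (hs.isClosed.preimage AffineMap.lineMap_continuous) ?_
    refine (Metric.isBounded_closedBall (x := (0 : ℝ)) (r := R / dist a b)).subset fun t ht => ?_
    have := hR ht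
    rw [Metric.mem_closedBall, dist_lineMap_left] at this
    rwa [Metric.mem_closedBall, dist_zero_right, le_div_iff₀ (dist_pos.2 hab)]
  obtain ⟨lo, hi, hTI⟩ : ∃ lo hi, T = Icc lo hi :=
    ⟨_, _, eq_Icc_of_connected_compact ((hconv.affine_preimage L).isConnected ⟨0, h0⟩) hT⟩
  rw [hTI] at h0 h1
  have hlt : lo < hi := h0.1.trans_lt (zero_lt_one.trans_le h1.2)
  refine ⟨L lo, L hi, (AffineMap.lineMap_injective ℝ hab).ne hlt.ne, ?_⟩
  rw [← hLT, hTI, ← segment_eq_Icc hlt.le, image_segment]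

end NormedGroup

section SupNormCube

variable {n : ℕ}

/-- `(j, s)` encodes the functional `s • e_j*`; these are the extreme points of the dual (`ℓ¹`)
unit ball. -/
def IsNorming (w : Fin 3 → ℝ) (j : Fin 3) (s : ℤˣ) : Prop := (s : ℝ) * w j = ‖w‖

lemma units_mul_apply_le_norm (w : Fin 3 → ℝ) (j : Fin 3) (s : ℤˣ) : (s : ℝ) * w j ≤ ‖w‖ := by
  have hj : |w j| ≤ ‖w‖ := by simpa using norm_le_pi_norm w j
  rcases Int.units_eq_one_or s with rfl | rfl
  · simpa using (le_abs_self _).trans hj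
  · simpa using (neg_le_abs _).trans hj

lemma exists_isNorming (w : Fin 3 → ℝ) : ∃ j s, IsNorming w j s := by
  obtain ⟨j, -, hj⟩ := Finset.exists_mem_eq_sup Finset.univ Finset.univ_nonempty fun k => ‖w k‖₊
  have hj : |w j| = ‖w‖ := by rw [Pi.norm_def, hj]; simp
  rcases le_total 0 (w j) with h | h
  · exact ⟨j, 1, by simp [IsNorming, ← hj, abs_of_nonneg h]⟩
  · exact ⟨j, -1, by simp [IsNorming, ← hj, abs_of_nonpos h]⟩

lemma isNorming_smul_iff {c : ℝ} (hc : 0 < c) {w : Fin 3 → ℝ} {j : Fin 3} {s : ℤˣ} :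
    IsNorming (c • w) j s ↔ IsNorming w j s := by
  simp [IsNorming, norm_smul, abs_of_pos hc, mul_left_comm _ c, hc.ne']

lemma IsNorming.of_norm_sum_eq {ι : Type*} [Fintype ι] {a : ι → Fin 3 → ℝ} {j : Fin 3} {s : ℤˣ}
    (h : IsNorming (∑ k, a k) j s) (hsum : ‖∑ k, a k‖ = ∑ k, ‖a k‖) (k : ι) :
    IsNorming (a k) j s := by
  have : ∑ k, (s : ℝ) * a k j = ∑ k, ‖a k‖ := by
    rw [← hsum, ← h, Finset.sum_apply, Finset.mul_sum]
  exact (Finset.sum_eq_sum_iff_of_le fun k _ => units_mul_apply_le_norm _ _ _).1 this k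
    (Finset.mem_univ k)

lemma IsNorming.norm_eventuallyEq {w : Fin 3 → ℝ} {j : Fin 3} {s : ℤˣ} (h : IsNorming w j s)
    (huniq : ∀ j' s', IsNorming w j' s' → (j', s') = (j, s)) :
    (fun y : Fin 3 → ℝ => ‖y‖) =ᶠ[𝓝 w] fun y => (s : ℝ) * y j := by
  have hlt : ∀ᶠ y in 𝓝 w, ∀ js : Fin 3 × ℤˣ, js ≠ (j, s) → (js.2 : ℝ) * y js.1 < s * y j := by
    refine eventually_all.2 fun js => ?_
    by_cases hjs : js = (j, s)
    · exact Eventually.of_forall fun _ h => absurd hjs h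
    · have hw : (js.2 : ℝ) * w js.1 < s * w j :=
        ((units_mul_apply_le_norm w _ _).trans_eq h.symm).lt_of_ne
          fun heq => hjs (huniq js.1 js.2 (heq.trans h))
      have hcont : ∀ (k : Fin 3) (t : ℤˣ), Continuous fun y : Fin 3 → ℝ => (t : ℝ) * y k :=
        fun k t => continuous_const.mul (continuous_apply k)
      exact ((hcont _ _).continuousAt.eventually_lt (hcont _ _).continuousAt hw).mono
        fun _ hy _ => hy
  filter_upwards [hlt] with y hy
  obtain ⟨j', s', hy'⟩ := exists_isNorming y
  by_cases hjs : (j', s') = (j, s)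
  · obtain ⟨rfl, rfl⟩ := Prod.ext_iff.1 hjs
    exact hy'.symm
  · exact absurd hy' ((hy _ hjs).trans_le (units_mul_apply_le_norm y j s)).ne

lemma eq_zero_of_isNorming_neg {w : Fin 3 → ℝ} {j : Fin 3} {s : ℤˣ} (h : IsNorming w j s)
    (h' : IsNorming w j (-s)) : w = 0 := by
  simp only [IsNorming, Units.val_neg, Int.cast_neg, neg_mul] at h h'
  exact norm_eq_zero.1 (by linarith)

lemma odd_sum_units (hn : Odd n) (s : Fin n → ℤˣ) : Odd (∑ i, (s i : ℤ)) := by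
  have hs : ∀ i, ((s i : ℤ) : ZMod 2) = 1 := fun i => by
    rcases Int.units_eq_one_or (s i) with h | h <;> simp [h]
  rw [← ZMod.intCast_eq_one_iff_odd]
  push_cast
  simp [hs, ZMod.natCast_eq_one_iff_odd.2 hn]

/-- A vanishing cross product forces the third coordinate of `Ψ` to vanish and `Ψ k' = -t t' Ψ k`,
which makes the coordinate sum of `Ψ` even. -/
lemma intCast_cross_single_sub_single_ne_zero {Ψ : Fin 3 → ℤ} (hΨ : Odd (∑ c, Ψ c))
    {k k' : Fin 3} (hk : k ≠ k') (t t' : ℤˣ) :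
    (fun c => (Ψ c : ℝ)) ⨯₃ (Pi.single k (t : ℝ) - Pi.single k' (t' : ℝ)) ≠ 0 := by
  intro h
  rw [Int.odd_iff, Fin.sum_univ_three] at hΨ
  have h' := congrFun h
  simp only [cross_apply, Fin.forall_fin_succ] at h'
  rcases Int.units_eq_one_or t with rfl | rfl <;> rcases Int.units_eq_one_or t' with rfl | rfl <;>
    fin_cases k <;> fin_cases k' <;> simp at hk h' <;> norm_cast at h' <;> omega

def signedSum {R : Type*} [Ring R] (j : Fin n → Fin 3) (s : Fin n → ℤˣ) : Fin 3 → R :=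
  ∑ i, Pi.single (j i) ((s i : ℤ) : R)

lemma signedSum_dotProduct {R : Type*} [CommRing R] (j : Fin n → Fin 3) (s : Fin n → ℤˣ)
    (v : Fin 3 → R) : signedSum j s ⬝ᵥ v = ∑ i, ((s i : ℤ) : R) * v (j i) := by
  simp [signedSum, sum_dotProduct, single_dotProduct]

lemma intCast_signedSum (j : Fin n → Fin 3) (s : Fin n → ℤˣ) :
    (fun c => ((signedSum j s c : ℤ) : ℝ)) = signedSum j s := by
  ext c
  simp [signedSum, Pi.single_apply]

lemma odd_sum_signedSum (hn : Odd n) (j : Fin n → Fin 3) (s : Fin n → ℤˣ) :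
    Odd (∑ c, (signedSum j s c : ℤ)) := by
  have h := signedSum_dotProduct (R := ℤ) j s 1
  simp only [dotProduct_one, Pi.one_apply, mul_one] at h
  exact h ▸ odd_sum_units hn s

lemma signedSum_ne_zero (hn : Odd n) (j : Fin n → Fin 3) (s : Fin n → ℤˣ) :
    (signedSum j s : Fin 3 → ℝ) ≠ 0 := by
  rw [← intCast_signedSum]
  intro h
  have h0 : ∀ c, signedSum j s c = (0 : ℤ) := fun c => by simpa using congrFun h c
  have := odd_sum_signedSum hn j s
  simp [h0] at this

lemma signedSum_cross_ne_zero (hn : Odd n) (j : Fin n → Fin 3) (s : Fin n → ℤˣ) {k k' : Fin 3}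
    (hk : k ≠ k') (t t' : ℤˣ) :
    (signedSum j s : Fin 3 → ℝ) ⨯₃ (Pi.single k (t : ℝ) - Pi.single k' (t' : ℝ)) ≠ 0 := by
  rw [← intCast_signedSum]
  exact intCast_cross_single_sub_single_ne_zero (odd_sum_signedSum hn j s) hk t t'

lemma collinear_of_forall_dotProduct_sub_eq_zero {K : Type*} [Field K] {ψ δ : Fin 3 → K}
    (hψδ : ψ ⨯₃ δ ≠ 0) {s : Set (Fin 3 → K)} {p₀ : Fin 3 → K} (hp₀ : p₀ ∈ s)
    (h : ∀ p ∈ s, ψ ⬝ᵥ (p - p₀) = 0 ∧ δ ⬝ᵥ (p - p₀) = 0) : Collinear K s := by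
  refine (collinear_iff_of_mem hp₀).2 ⟨ψ ⨯₃ δ, fun p hp => ?_⟩
  obtain ⟨hψ, hδ⟩ := h p hp
  have hcross : (ψ ⨯₃ δ) ⨯₃ (p - p₀) = 0 := by
    rw [← cross_anticomm, cross_cross_eq_smul_sub_smul', dotProduct_comm, hψ, hδ]
    simp
  have hdep := mt crossProduct_ne_zero_iff_linearIndependent.2 (not_not.2 hcross)
  rw [LinearIndependent.pair_iff' hψδ] at hdep
  obtain ⟨r, hr⟩ := not_forall_not.1 hdep
  exact ⟨r, by rw [hr, vadd_eq_add, sub_add_cancel]⟩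

lemma signedSum_dotProduct_sub_eq_zero {x : Fin n → Fin 3 → ℝ} {a b : Fin 3 → ℝ}
    (ha : a ∈ ft x) (hb : b ∈ ft x) {j : Fin n → Fin 3} {s : Fin n → ℤˣ}
    (hja : ∀ i, IsNorming (a - x i) (j i) (s i)) (hjb : ∀ i, IsNorming (b - x i) (j i) (s i)) :
    signedSum j s ⬝ᵥ (b - a) = 0 := by
  have h : ∑ i, ((s i : ℤ) : ℝ) * (b - a) (j i) = ∑ i, ‖b - x i‖ - ∑ i, ‖a - x i‖ := by
    rw [← Finset.sum_sub_distrib]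
    refine Finset.sum_congr rfl fun i _ => ?_
    rw [← hja i, ← hjb i]
    simp only [Pi.sub_apply]
    ring
  rw [signedSum_dotProduct, h, le_antisymm (hb a) (ha b), sub_self]

lemma exists_isNorming_ne_of_mem_ft (hn : Odd n) (x : Fin n → Fin 3 → ℝ) {z : Fin 3 → ℝ}
    (hz : z ∈ ft x) : ∃ i j s j' s', IsNorming (z - x i) j s ∧ IsNorming (z - x i) j' s' ∧
      (j, s) ≠ (j', s') := by
  by_contra! huniq
  choose j s hjs using fun i => exists_isNorming (z - x i)
  set ψ : Fin 3 → ℝ := signedSum j s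
  have hloc : (fun y => ∑ i, ‖y - x i‖) =ᶠ[𝓝 z]
      fun y => ∑ i, ((s i : ℤ) : ℝ) * (y - x i) (j i) := by
    have hi : ∀ i, ∀ᶠ y in 𝓝 z, ‖y - x i‖ = ((s i : ℤ) : ℝ) * (y - x i) (j i) := fun i =>
      ((hjs i).norm_eventuallyEq fun j' s' h => (huniq i _ _ _ _ (hjs i) h).symm).comp_tendsto
        ((continuous_sub_right (x i)).tendsto z)
    filter_upwards [eventually_all.2 hi] with y hy
    exact Finset.sum_congr rfl fun i _ => hy i
  have haffine : (fun t : ℝ => ∑ i, ‖(z - t • ψ) - x i‖) =ᶠ[𝓝 0]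
      fun t => ∑ i, ‖z - x i‖ - t * (ψ ⬝ᵥ ψ) := by
    have hcurve : Tendsto (fun t : ℝ => z - t • ψ) (𝓝 0) (𝓝 z) :=
      Continuous.tendsto' (by fun_prop) 0 z (by simp)
    filter_upwards [hloc.comp_tendsto hcurve] with t ht
    simp only [Function.comp_apply] at ht
    rw [ht, signedSum_dotProduct, Finset.mul_sum, ← Finset.sum_sub_distrib]
    refine Finset.sum_congr rfl fun i _ => ?_
    rw [← hjs i]
    simp only [Pi.sub_apply, Pi.smul_apply, smul_eq_mul]
    ring
  have hmin : IsLocalMin (fun t : ℝ => ∑ i, ‖(z - t • ψ) - x i‖) 0 :=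
    Eventually.of_forall fun t => by simpa using hz (z - t • ψ)
  have hderiv : HasDerivAt (fun t : ℝ => ∑ i, ‖(z - t • ψ) - x i‖) (-(ψ ⬝ᵥ ψ)) 0 := by
    refine HasDerivAt.congr_of_eventuallyEq ?_ haffine
    simpa using ((hasDerivAt_id (0 : ℝ)).mul_const (ψ ⬝ᵥ ψ)).const_sub (∑ i, ‖z - x i‖)
  have hψ : ψ ⬝ᵥ ψ = 0 := neg_eq_zero.1 (hmin.hasDerivAt_eq_zero hderiv)
  exact signedSum_ne_zero hn j s (dotProduct_self_eq_zero.1 hψ)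

lemma collinear_of_forall_isNorming (hn : Odd n) {x : Fin n → Fin 3 → ℝ} {P : Set (Fin 3 → ℝ)}
    (hP : P ⊆ ft x) {p₀ : Fin 3 → ℝ} (hp₀ : p₀ ∈ P) (J : Fin n → Fin 3) (S : Fin n → ℤˣ)
    (hJS : ∀ p ∈ P, ∀ i, IsNorming (p - x i) (J i) (S i)) {i : Fin n} {j j' : Fin 3} {s s' : ℤˣ}
    (hjj' : j ≠ j') (h : ∀ p ∈ P, IsNorming (p - x i) j s ∧ IsNorming (p - x i) j' s') :
    Collinear ℝ P := by
  refine collinear_of_forall_dotProduct_sub_eq_zero (signedSum_cross_ne_zero hn J S hjj' s s') hp₀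
    fun p hp => ⟨signedSum_dotProduct_sub_eq_zero (hP hp₀) (hP hp) (hJS p₀ hp₀) (hJS p hp), ?_⟩
  have e : ∀ p ∈ P, ((s : ℤ) : ℝ) * (p - x i) j = ((s' : ℤ) : ℝ) * (p - x i) j' :=
    fun p hp => (h p hp).1.trans (h p hp).2.symm
  have e₀ := e p₀ hp₀
  have e₁ := e p hp
  simp only [sub_dotProduct, single_dotProduct, Pi.sub_apply] at e₀ e₁ ⊢
  linear_combination e₁ - e₀

theorem collinear_of_mem_ft (hn : Odd n) (x : Fin n → Fin 3 → ℝ) {p q r : Fin 3 → ℝ}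
    (hp : p ∈ ft x) (hq : q ∈ ft x) (hr : r ∈ ft x) : Collinear ℝ {p, q, r} := by
  set y : Fin 3 → Fin 3 → ℝ := ![p, q, r]
  have hy : ∀ k, y k ∈ ft x := by
    intro k; fin_cases k <;> assumption
  set m : Fin 3 → ℝ := ∑ k, (3 : ℝ)⁻¹ • y k
  have hm : m ∈ ft x :=
    (convex_ft x).sum_mem (fun _ _ => by norm_num) (by norm_num) fun k _ => hy k
  have hcommon : ∀ i j s, IsNorming (m - x i) j s → ∀ z ∈ ({p, q, r} : Set _),
      IsNorming (z - x i) j s := by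
    intro i j s h
    have hmi : m - x i = (3 : ℝ)⁻¹ • ∑ k, (y k - x i) := by
      simp only [m, ← Finset.smul_sum, Finset.sum_sub_distrib, Finset.sum_const,
        Finset.card_univ, Fintype.card_fin]
      module
    rw [hmi, isNorming_smul_iff (by norm_num)] at h
    have hk := h.of_norm_sum_eq (norm_sum_sub_eq_sum_norm_sub_of_mem_ft x hy i)
    rintro _ (rfl | rfl | rfl)
    exacts [hk 0, hk 1, hk 2]
  have hsub : {p, q, r} ⊆ ft x := by
    rintro _ (rfl | rfl | rfl) <;> assumption
  obtain ⟨i, j, s, j', s', h, h', hne⟩ := exists_isNorming_ne_of_mem_ft hn x hm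
  rcases eq_or_ne j j' with rfl | hjj'
  · have hs' : s' = -s := by
      rcases Int.units_eq_one_or s with rfl | rfl <;> rcases Int.units_eq_one_or s' with rfl | rfl
        <;> simp_all
    subst hs'
    have hxi : ∀ z ∈ ({p, q, r} : Set _), z = x i := fun z hz =>
      sub_eq_zero.1 (eq_zero_of_isNorming_neg (hcommon i j s h z hz) (hcommon i j (-s) h' z hz))
    rw [hxi p (by simp), hxi q (by simp), hxi r (by simp)]
    simp [collinear_singleton]
  · choose J S hJS using fun i => exists_isNorming (m - x i)
    exact collinear_of_forall_isNorming hn hsub (Set.mem_insert p _) J S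
      (fun z hz i => hcommon i _ _ (hJS i) z hz) hjj'
      fun z hz => ⟨hcommon i j s h z hz, hcommon i j' s' h' z hz⟩

theorem exists_ft_eq_segment_of_odd (hn : Odd n) (x : Fin n → Fin 3 → ℝ)
    (h : (ft x).Nontrivial) : ∃ a b, a ≠ b ∧ ft x = segment ℝ a b := by
  have : NeZero n := NeZero.of_pos hn.pos
  obtain ⟨a, ha, b, hb, hab⟩ := h
  exact exists_eq_segment_of_subset_affineSpan_pair (isCompact_ft x) (convex_ft x) ha hb hab
    fun c hc => (collinear_of_mem_ft hn x ha hb hc).mem_affineSpan_of_mem_of_ne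
      (by simp) (by simp) (by simp) hab

end SupNormCube

/-- In `ℝ³` with the supremum norm (unit ball a cube), for any three points, if the
Fermat–Torricelli set is not a single point then it is a (non-degenerate) closed segment. -/
theorem cube_norm_ft_segment_of_nonunique
    (x₁ x₂ x₃ : Fin 3 → ℝ)
    (h : ¬ ∃ p : Fin 3 → ℝ, ft ![x₁, x₂, x₃] = {p}) :
    ∃ a b : Fin 3 → ℝ, a ≠ b ∧ ft ![x₁, x₂, x₃] = segment ℝ a b :=
  exists_ft_eq_segment_of_odd (by decide) _
    ((ft_nonempty_s14 _).exists_eq_singleton_or_nontrivial.resolve_left h)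
end

section
/- In the space ℝ³ equipped with the ℓ¹ norm ‖(x,y,z)‖ = |x| + |y| + |z| (whose unit ball is a regular octahedron), for any three points x_1, x_2, x_3 the Fermat–Torricelli set ft(x_1, x_2, x_3) is a single point. -/
theorem ft_eq_singleton_of_forall_add_norm_sub_le {X : Type*} [NormedAddCommGroup X] {n : ℕ}
    {x : Fin n → X} {p : X} (hp : ∀ q, ∑ i, ‖p - x i‖ + ‖q - p‖ ≤ ∑ i, ‖q - x i‖) :
    ft x = {p} := by
  ext q
  refine ⟨fun hq => ?_, ?_⟩
  · have : ‖q - p‖ ≤ 0 := by linarith [hq p, hp q]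
    exact sub_eq_zero.mp (norm_le_zero_iff.mp this)
  · rintro rfl r
    linarith [hp r, norm_nonneg (r - q)]

theorem sum_abs_sub_median_add_abs_le_of_monotone :
    ∀ (n : ℕ) (s : Fin (2 * n + 1) → ℝ), Monotone s → ∀ t : ℝ,
      ∑ j, |s ⟨n, by omega⟩ - s j| + |t - s ⟨n, by omega⟩| ≤ ∑ j, |t - s j|
  | 0, s, _, t => by simp
  | n + 1, s, hs, t => by
    set m := s ⟨n + 1, by omega⟩
    have hinner := sum_abs_sub_median_add_abs_le_of_monotone n (fun j => s j.castSucc.succ)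
      (hs.comp (Fin.strictMono_succ.monotone.comp Fin.strictMono_castSucc.monotone)) t
    have hmid : (⟨n, by omega⟩ : Fin (2 * n + 1)).castSucc.succ = ⟨n + 1, by omega⟩ := rfl
    rw [hmid] at hinner
    have h0 : s 0 ≤ m := hs (Fin.zero_le _)
    have hl : m ≤ s (Fin.last _) := hs (Fin.le_last _)
    -- the extreme points `s 0 ≤ m ≤ s last` are paired, and the rest is the induction hypothesis
    have houter : |m - s 0| + |m - s (Fin.last _)| ≤ |t - s 0| + |t - s (Fin.last _)| := by
      rw [abs_of_nonneg (sub_nonneg.mpr h0), abs_of_nonpos (sub_nonpos.mpr hl)]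
      linarith [le_abs_self (t - s 0), neg_abs_le (t - s (Fin.last _))]
    have split : ∀ f : Fin (2 * (n + 1) + 1) → ℝ,
        ∑ j, f j = f 0 + (∑ j : Fin (2 * n + 1), f j.castSucc.succ) + f (Fin.last _) := by
      intro f
      rw [Fin.sum_univ_succ, add_assoc]
      exact congrArg _ (Fin.sum_univ_castSucc fun j => f j.succ)
    rw [split, split]
    linarith

theorem exists_sum_abs_sub_add_abs_le (n : ℕ) (a : Fin (2 * n + 1) → ℝ) :
    ∃ m : ℝ, ∀ t : ℝ, ∑ j, |m - a j| + |t - m| ≤ ∑ j, |t - a j| := by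
  set σ := Tuple.sort a
  refine ⟨a (σ ⟨n, by omega⟩), fun t => ?_⟩
  have h := sum_abs_sub_median_add_abs_le_of_monotone n (a ∘ σ) (Tuple.monotone_sort a) t
  simp only [Function.comp_apply] at h
  rwa [Equiv.sum_comp σ fun j => |a (σ ⟨n, by omega⟩) - a j|,
    Equiv.sum_comp σ fun j => |t - a j|] at h

theorem sum_norm_sub_toLp_add_le_of_forall_coord {ι : Type*} [Fintype ι] {n : ℕ}
    (x : Fin n → PiLp 1 (fun _ : ι => ℝ)) (m : ι → ℝ)
    (hm : ∀ i t, ∑ k, |m i - x k i| + |t - m i| ≤ ∑ k, |t - x k i|)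
    (q : PiLp 1 (fun _ : ι => ℝ)) :
    ∑ k, ‖WithLp.toLp 1 m - x k‖ + ‖q - WithLp.toLp 1 m‖ ≤ ∑ k, ‖q - x k‖ := by
  simp only [PiLp.norm_eq_of_L1, PiLp.sub_apply, Real.norm_eq_abs]
  rw [Finset.sum_comm, Finset.sum_comm (f := fun k i => |q i - x k i|),
    ← Finset.sum_add_distrib]
  exact Finset.sum_le_sum fun i _ => hm i (q i)

theorem exists_ft_eq_singleton_of_piLp_one {ι : Type*} [Fintype ι] (n : ℕ)
    (x : Fin (2 * n + 1) → PiLp 1 (fun _ : ι => ℝ)) : ∃ p, ft x = {p} := by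
  choose m hm using fun i => exists_sum_abs_sub_add_abs_le n fun k => x k i
  exact ⟨_, ft_eq_singleton_of_forall_add_norm_sub_le
    (sum_norm_sub_toLp_add_le_of_forall_coord x m hm)⟩

/-- In `ℝ³` with the `ℓ¹` norm (unit ball a regular octahedron), the Fermat–Torricelli
set of any three points is a single point. -/
theorem octahedron_norm_ft_unique
    (x₁ x₂ x₃ : PiLp 1 (fun _ : Fin 3 => ℝ)) :
    ∃ p : PiLp 1 (fun _ : Fin 3 => ℝ), ft ![x₁, x₂, x₃] = {p} :=
  exists_ft_eq_singleton_of_piLp_one 1 ![x₁, x₂, x₃]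
end

section
/- Let Y be a real normed vector space of dimension 2 and let X = Y × ℝ be equipped with the norm ‖(y,t)‖ = max(‖y‖, |t|) (so that the unit ball of X is a prism/cylinder over the unit ball of Y). Then for every integer n ≥ 2 there exist n pairwise distinct points x_1,…,x_n in X such that the Fermat–Torricelli set ft(x_1,…,x_n) contains at least two distinct points. -/
/-!
Place the points at `(y i, 0)`, where `0` is a Fermat–Torricelli point of the `y i` in `Y` and
every `‖y i‖ ≥ 1`. Since the sup norm does not see a height `|t| ≤ ‖y i‖`, every `(0, t)` with
`|t| ≤ 1` is then a Fermat–Torricelli point as well. Such `y` are built from symmetric pairs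
`±v` and, for odd `n`, three unit vectors normed by unit functionals with `φ + ψ + χ = 0`; these
exist because the unit sphere of the dual plane is connected, so `ψ ↦ ‖φ + ψ‖` takes the value
`1` on it.
-/

open Finset Metric

section NormedGroup

variable {E : Type*} [NormedAddCommGroup E]

lemma mem_ft_append {m n : ℕ} {x : Fin m → E} {x' : Fin n → E} {p : E}
    (hx : p ∈ ft x) (hx' : p ∈ ft x') : p ∈ ft (Fin.append x x') := by
  intro q
  simpa only [Fin.sum_univ_add, Fin.append_left, Fin.append_right] using
    add_le_add (hx q) (hx' q)

lemma mk_mem_ft_prod {n : ℕ} {y : Fin n → E} {p : E} (hp : p ∈ ft y) {t : ℝ}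
    (ht : ∀ i, |t| ≤ ‖p - y i‖) : (p, t) ∈ ft (fun i => (y i, (0 : ℝ))) := by
  intro q
  calc ∑ i, ‖(p, t) - (y i, (0 : ℝ))‖ = ∑ i, ‖p - y i‖ :=
        sum_congr rfl fun i _ => by simp [Prod.norm_def, ht i]
    _ ≤ ∑ i, ‖q.1 - y i‖ := hp q.1
    _ ≤ ∑ i, ‖q - (y i, (0 : ℝ))‖ := by
        gcongr with i
        exact norm_fst_le (q - (y i, 0))

end NormedGroup

section NormedSpace

variable {E : Type*} [NormedAddCommGroup E] [NormedSpace ℝ E]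

lemma zero_mem_ft_append_neg {m : ℕ} (a : Fin m → E) : 0 ∈ ft (Fin.append a (-a)) := by
  intro q
  simp only [Fin.sum_univ_add, Fin.append_left, Fin.append_right, zero_sub, Pi.neg_apply,
    norm_neg, sub_neg_eq_add, ← sum_add_distrib]
  refine sum_le_sum fun i _ => ?_
  calc ‖a i‖ + ‖a i‖ = ‖(q + a i) - (q - a i)‖ := by
        rw [add_sub_sub_cancel, ← two_smul ℝ (a i), norm_smul, Real.norm_two, two_mul]
    _ ≤ ‖q + a i‖ + ‖q - a i‖ := norm_sub_le _ _
    _ = ‖q - a i‖ + ‖q + a i‖ := add_comm _ _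

lemma zero_mem_ft_of_sum_eq_zero {n : ℕ} {y : Fin n → E} (φ : Fin n → StrongDual ℝ E)
    (hφ : ∀ i, ‖φ i‖ ≤ 1) (hy : ∀ i, φ i (y i) = ‖y i‖) (hsum : ∑ i, φ i = 0) :
    0 ∈ ft y := by
  intro q
  calc ∑ i, ‖0 - y i‖ = ∑ i, φ i (y i - q) := by
        simp only [zero_sub, norm_neg, map_sub, hy, sum_sub_distrib,
          ← _root_.sum_apply, hsum, _root_.zero_apply, sub_zero]
    _ ≤ ∑ i, ‖q - y i‖ := by
        gcongr with i
        calc φ i (y i - q) ≤ ‖φ i (y i - q)‖ := Real.le_norm_self _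
          _ ≤ 1 * ‖y i - q‖ := (φ i).le_of_opNorm_le (hφ i) _
          _ = ‖q - y i‖ := by rw [one_mul, norm_sub_rev]

lemma exists_injective_zero_mem_ft_even [Nontrivial E] (m : ℕ) {c : ℝ} (hc : 0 < c) :
    ∃ y : Fin (m + m) → E, Function.Injective y ∧ 0 ∈ ft y ∧ ∀ i, c ≤ ‖y i‖ := by
  obtain ⟨v, hv⟩ := (NormedSpace.sphere_nonempty (x := (0 : E)) (r := 1)).2 zero_le_one
  rw [mem_sphere_zero_iff_norm] at hv
  set a : Fin m → E := fun j => ((j : ℝ) + c) • v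
  have ha : ∀ j, ‖a j‖ = j + c := fun j => by
    rw [norm_smul, hv, mul_one, Real.norm_of_nonneg (by positivity)]
  have ha_inj : Function.Injective a := fun j k hjk => by
    simpa [ha, Fin.val_inj] using congrArg norm hjk
  refine ⟨Fin.append a (-a), ?_, zero_mem_ft_append_neg a, ?_⟩
  · refine Fin.append_injective_iff.2 ⟨ha_inj, neg_injective.comp ha_inj, fun j k hjk => ?_⟩
    have : ‖a j + a k‖ = 0 := by simp [hjk]
    rw [← add_smul, norm_smul, hv, mul_one, Real.norm_of_nonneg (by positivity)] at this
    linarith [(j : ℕ).cast_nonneg (α := ℝ), (k : ℕ).cast_nonneg (α := ℝ)]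
  · refine Fin.addCases (fun j => ?_) (fun j => ?_) <;>
      simp only [Fin.append_left, Fin.append_right, Pi.neg_apply, norm_neg, ha] <;>
      linarith [(j : ℕ).cast_nonneg (α := ℝ)]

lemma StrongDual.exists_norm_eq_one_apply_eq_norm [FiniteDimensional ℝ E] [Nontrivial E]
    (f : StrongDual ℝ E) : ∃ v : E, ‖v‖ = 1 ∧ f v = ‖f‖ := by
  obtain ⟨v, hv, hmax⟩ := (isCompact_sphere (0 : E) 1).exists_isMaxOn
    ((NormedSpace.sphere_nonempty (x := (0 : E))).2 zero_le_one) f.continuous.continuousOn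
  rw [mem_sphere_zero_iff_norm] at hv
  have hbound : ∀ x : E, ‖x‖ = 1 → ‖f x‖ ≤ f v := fun x hx => by
    have h₁ : f x ≤ f v := hmax (by simpa using hx)
    have h₂ : f (-x) ≤ f v := hmax (by simpa using hx)
    rw [map_neg] at h₂
    exact abs_le.2 ⟨by linarith, h₁⟩
  refine ⟨v, hv, le_antisymm ?_ ?_⟩
  · calc f v ≤ ‖f v‖ := Real.le_norm_self _
      _ ≤ ‖f‖ * ‖v‖ := f.le_opNorm v
      _ = ‖f‖ := by rw [hv, mul_one]
  · exact f.opNorm_le_of_unit_norm ((norm_nonneg _).trans (hbound v hv)) hbound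

lemma exists_norm_eq_one_norm_add_eq_one (h : 1 < Module.rank ℝ E) {a : E} (ha : ‖a‖ = 1) :
    ∃ b : E, ‖b‖ = 1 ∧ ‖a + b‖ = 1 := by
  have hmem : ∀ {x : E}, ‖x‖ = 1 → x ∈ sphere (0 : E) 1 := fun hx => by simpa using hx
  have hval : (1 : ℝ) ∈ Set.Icc ‖a + -a‖ ‖a + a‖ := by
    rw [add_neg_cancel, norm_zero, ← two_smul ℝ a, norm_smul, ha]
    norm_num
  obtain ⟨b, hb, hab⟩ := (isConnected_sphere h (0 : E) zero_le_one).isPreconnected.intermediate_value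
    (hmem (by rwa [norm_neg])) (hmem ha) (continuous_const.add continuous_id).norm.continuousOn hval
  exact ⟨b, by simpa using hb, hab⟩

lemma exists_unit_triple_zero_mem_ft (h : 2 ≤ Module.finrank ℝ E) :
    ∃ u : Fin 3 → E, Function.Injective u ∧ (∀ i, ‖u i‖ = 1) ∧ 0 ∈ ft u := by
  have : FiniteDimensional ℝ E := Module.finite_of_finrank_pos (by omega)
  have : Nontrivial E := Module.nontrivial_of_finrank_pos (R := ℝ) (by omega)
  have hrank : 1 < Module.rank ℝ (StrongDual ℝ E) := by
    refine Module.one_lt_rank_of_one_lt_finrank ?_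
    rw [← LinearMap.toContinuousLinearMap.finrank_eq, Subspace.dual_finrank_eq]
    omega
  obtain ⟨v, hv⟩ := exists_ne (0 : E)
  obtain ⟨φ, hφ, -⟩ := exists_dual_vector ℝ v (norm_ne_zero_iff.2 hv)
  obtain ⟨ψ, hψ, hφψ⟩ := exists_norm_eq_one_norm_add_eq_one hrank hφ
  set Φ : Fin 3 → StrongDual ℝ E := ![φ, ψ, -(φ + ψ)]
  have hΦ : ∀ i, ‖Φ i‖ = 1 := by
    intro i; fin_cases i <;> simp [Φ, hφ, hψ, hφψ, -neg_add_rev]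
  have hpair : ∀ i j, i ≠ j → ‖Φ i + Φ j‖ = 1 := by
    intro i j; fin_cases i <;> fin_cases j <;> simp [Φ, hφ, hψ, hφψ, add_comm ψ φ]
  choose u hu hfu using fun f : StrongDual ℝ E => f.exists_norm_eq_one_apply_eq_norm
  refine ⟨fun i => u (Φ i), fun i j hij => ?_, fun i => hu _,
    zero_mem_ft_of_sum_eq_zero Φ (fun i => (hΦ i).le) (fun i => by rw [hfu, hΦ, hu]) ?_⟩
  · by_contra hne
    replace hij : u (Φ i) = u (Φ j) := hij
    have hi : Φ i (u (Φ j)) = 1 := by rw [← hij, hfu, hΦ]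
    have hj : Φ j (u (Φ j)) = 1 := by rw [hfu, hΦ]
    -- a common norming vector of `Φ i` and `Φ j` would force `‖Φ i + Φ j‖ ≥ 2`
    have h₂ : (Φ i + Φ j) (u (Φ j)) ≤ ‖Φ i + Φ j‖ * ‖u (Φ j)‖ :=
      (Real.le_norm_self _).trans ((Φ i + Φ j).le_opNorm _)
    rw [_root_.add_apply, hi, hj, hpair i j hne, hu] at h₂
    norm_num at h₂
  · simp [Φ, Fin.sum_univ_three]

lemma exists_injective_zero_mem_ft (h : 2 ≤ Module.finrank ℝ E) {n : ℕ} (hn : 2 ≤ n) :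
    ∃ y : Fin n → E, Function.Injective y ∧ 0 ∈ ft y ∧ ∀ i, 1 ≤ ‖y i‖ := by
  have : Nontrivial E := Module.nontrivial_of_finrank_pos (R := ℝ) (by omega)
  obtain ⟨m, rfl | rfl⟩ : ∃ m, n = m + m ∨ n = 3 + (m + m) := by
    rcases Nat.even_or_odd' n with ⟨k, rfl | rfl⟩
    exacts [⟨k, by omega⟩, ⟨k - 1, by omega⟩]
  · exact exists_injective_zero_mem_ft_even m one_pos
  · obtain ⟨u, hu_inj, hu, hu0⟩ := exists_unit_triple_zero_mem_ft h
    obtain ⟨y, hy_inj, hy0, hy⟩ := exists_injective_zero_mem_ft_even (E := E) m two_pos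
    refine ⟨Fin.append u y, Fin.append_injective_iff.2 ⟨hu_inj, hy_inj, fun i j hij => ?_⟩,
      mem_ft_append hu0 hy0, Fin.addCases (fun i => ?_) (fun j => ?_)⟩
    · linarith [hu i, hy j, congrArg norm hij]
    · simp [hu]
    · simpa using one_le_two.trans (hy j)

end NormedSpace

/-- If the unit ball of a three-dimensional normed space is a prism, i.e. the space is
`Y × ℝ` with the sup norm where `Y` is a normed plane, then for every `n ≥ 2` there exist
`n` pairwise distinct points whose Fermat–Torricelli set contains at least two points. -/
theorem prism_norm_exists_nonunique_ft
    {Y : Type*} [NormedAddCommGroup Y] [NormedSpace ℝ Y]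
    (hd : Module.finrank ℝ Y = 2)
    {n : ℕ} (hn : 2 ≤ n) :
    ∃ x : Fin n → Y × ℝ, Function.Injective x ∧
      ∃ a ∈ ft x, ∃ b ∈ ft x, a ≠ b := by
  obtain ⟨y, hy_inj, hy0, hy⟩ := exists_injective_zero_mem_ft hd.ge hn
  have hsegment : ∀ t : ℝ, |t| ≤ 1 → ((0 : Y), t) ∈ ft (fun i => (y i, (0 : ℝ))) :=
    fun t ht => mk_mem_ft_prod hy0 fun i => by simpa using ht.trans (hy i)
  refine ⟨fun i => (y i, 0), fun i j hij => hy_inj (congrArg Prod.fst hij),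
    _, hsegment 0 (by simp), _, hsegment 1 (by simp), by simp⟩
end
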